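/- If A ∈ 𝔄 has the expansion A = Σ_{𝔍,𝔍'∈𝒫₊} a_{𝔍𝔍'}·Θ(C_𝔍)∘C_{𝔍'}, then A* has coefficients q_𝔍·q_{𝔍'}·conj(a_{𝔍𝔍'}). Moreover, A is hermitian (A* = A) if and only if s_𝔍·s_{𝔍'}·a_{𝔍𝔍'} is real for all 𝔍, 𝔍' ∈ 𝒫₊. -/

import Mathlib

open ComplexOrder

noncomputable section

/-- The setting of the paper: a finite set `Λ` with a fixed-point free involution `ϑ`
exchanging `Λp` and its complement, the Clifford algebra (algebra of Majoranas) `carrier`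
with self-adjoint generators `c i`, the global gauge automorphism `gauge`, the antilinear
reflection `*`-automorphism `Θ`, a square root `ζ` of `-1`, the twisted product `twist`,
a choice `P` of orderings of the subsets of `Λp` (giving the bases
`{C J : J ∈ P}` of `𝔄₊` and `{Θ(C J) ∘ C J' : J, J' ∈ P}` of `𝔄`),
and the tracial state `Tr` picking out the coefficient of `1` in the basis expansion. -/
structure MajoranaSetting where
  Λ : Type
  [fintypeΛ : Fintype Λ]
  [deceqΛ : DecidableEq Λ]
  ϑ : Λ → Λ
  ϑ_invol : Function.Involutive ϑ
  ϑ_fixfree : ∀ i, ϑ i ≠ i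
  Λp : Finset Λ
  ϑ_exch : ∀ i, i ∈ Λp ↔ ϑ i ∉ Λp
  carrier : Type
  [nring : NormedRing carrier]
  [nalg : NormedAlgebra ℂ carrier]
  [cmpl : CompleteSpace carrier]
  [starring : StarRing carrier]
  [starmod : StarModule ℂ carrier]
  c : Λ → carrier
  c_star : ∀ i, star (c i) = c i
  clifford : ∀ i j, c i * c j + c j * c i = if i = j then (2 : carrier) else 0
  gauge : carrier ≃ₐ[ℂ] carrier
  gauge_c : ∀ i, gauge (c i) = - c i
  Θ : carrier → carrier
  Θ_add : ∀ x y, Θ (x + y) = Θ x + Θ y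
  Θ_smul : ∀ (z : ℂ) (x), Θ (z • x) = (starRingEnd ℂ z) • Θ x
  Θ_mul : ∀ x y, Θ (x * y) = Θ x * Θ y
  Θ_star : ∀ x, Θ (star x) = star (Θ x)
  Θ_invol : ∀ x, Θ (Θ x) = x
  Θ_c : ∀ i, Θ (c i) = c (ϑ i)
  ζ : ℂ
  ζ_sq : ζ ^ 2 = -1
  twist : carrier → carrier → carrier
  twist_add_left : ∀ x x' y, twist (x + x') y = twist x y + twist x' y
  twist_add_right : ∀ x y y', twist x (y + y') = twist x y + twist x y'
  twist_smul_left : ∀ (z : ℂ) (x y), twist (z • x) y = z • twist x y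
  twist_smul_right : ∀ (z : ℂ) (x y), twist x (z • y) = z • twist x y
  twist_spec : ∀ (Am Ap Bm Bp : carrier) (a b a' b' : ℕ),
    a ≤ 1 → b ≤ 1 → a' ≤ 1 → b' ≤ 1 →
    Am ∈ Algebra.adjoin ℂ (c '' {i | i ∉ Λp}) →
    Ap ∈ Algebra.adjoin ℂ (c '' {i | i ∈ Λp}) →
    Bm ∈ Algebra.adjoin ℂ (c '' {i | i ∉ Λp}) →
    Bp ∈ Algebra.adjoin ℂ (c '' {i | i ∈ Λp}) →
    gauge Am = ((-1 : ℂ) ^ a) • Am →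
    gauge Ap = ((-1 : ℂ) ^ b) • Ap →
    gauge Bm = ((-1 : ℂ) ^ a') • Bm →
    gauge Bp = ((-1 : ℂ) ^ b') • Bp →
    twist (Am * Ap) (Bm * Bp)
      = ζ ^ ((a * b' : ℤ) - (b * a' : ℤ)) • (Am * Ap * (Bm * Bp))
  P : Finset (List Λ)
  P_nodup : ∀ J ∈ P, J.Nodup
  P_sub : ∀ J ∈ P, ∀ i ∈ J, i ∈ Λp
  P_unique : ∀ s : Finset Λ, s ⊆ Λp → ∃! J, J ∈ P ∧ J.toFinset = s
  Tr : carrier →ₗ[ℂ] ℂ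
  Tr_basis : ∀ J ∈ P, ∀ J' ∈ P,
    Tr (twist (Θ ((J.map c).prod)) ((J'.map c).prod))
      = if J = [] ∧ J' = [] then 1 else 0
  basis_indep : LinearIndependent ℂ
    (fun p : {J // J ∈ P} × {J // J ∈ P} =>
      twist (Θ ((p.1.1.map c).prod)) ((p.2.1.map c).prod))
  basis_span : ∀ x : carrier, x ∈ Submodule.span ℂ
    (Set.range fun p : {J // J ∈ P} × {J // J ∈ P} =>
      twist (Θ ((p.1.1.map c).prod)) ((p.2.1.map c).prod))
  plus_span : ∀ x ∈ Algebra.adjoin ℂ (c '' {i | i ∈ Λp}),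
    x ∈ Submodule.span ℂ (Set.range fun J : {J // J ∈ P} => ((J.1.map c).prod))

attribute [instance] MajoranaSetting.fintypeΛ MajoranaSetting.deceqΛ
  MajoranaSetting.nring MajoranaSetting.nalg MajoranaSetting.cmpl
  MajoranaSetting.starring MajoranaSetting.starmod

namespace MajoranaSetting

variable (S : MajoranaSetting)

/-- The subalgebra `𝔄₊` generated by the Majoranas on the `+` side. -/
def Aplus : Subalgebra ℂ S.carrier := Algebra.adjoin ℂ (S.c '' {i | i ∈ S.Λp})

/-- The subalgebra `𝔄₋` generated by the Majoranas on the `-` side. -/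
def Aminus : Subalgebra ℂ S.carrier := Algebra.adjoin ℂ (S.c '' {i | i ∉ S.Λp})

/-- The monomial `C_𝔍 = c_{i₁} ⋯ c_{i_k}`. -/
def C (J : List S.Λ) : S.carrier := (J.map S.c).prod

/-- `q_𝔍 = (-1)^{k(k-1)/2}`. -/
def q (J : List S.Λ) : ℂ := (-1 : ℂ) ^ (J.length * (J.length - 1) / 2)

/-- `s_𝔍 = ζ^{k(k-1)/2}`. -/
def sgn (J : List S.Λ) : ℂ := S.ζ ^ (J.length * (J.length - 1) / 2)

/-- The exponential `e^x` in the (finite-dimensional) algebra `𝔄`. -/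
def expm (x : S.carrier) : S.carrier := NormedSpace.exp x

/-- The Hamiltonian `H = -∑_{𝔍,𝔍' ∈ 𝒫₊} J_{𝔍𝔍'} Θ(C_𝔍) ∘ C_𝔍'`
determined by coupling constants `Jc`. -/
def Ham (Jc : List S.Λ → List S.Λ → ℂ) : S.carrier :=
  - ∑ J ∈ S.P, ∑ J' ∈ S.P, Jc J J' • S.twist (S.Θ (S.C J)) (S.C J')

/-- The index type of the basis `{C J : J ∈ 𝒫₊}`. -/
abbrev PIdx := {J : List S.Λ // J ∈ S.P}

/-- The index type `𝒫₊ - {∅}` of couplings across the reflection plane. -/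
abbrev PIdx0 := {p : S.PIdx // p.1 ≠ []}

/-- The full matrix of coupling constants. -/
def Jmat (Jc : List S.Λ → List S.Λ → ℂ) : Matrix S.PIdx S.PIdx ℂ :=
  Matrix.of fun p q => Jc p.1 q.1

/-- The matrix `J⁰` of coupling constants across the reflection plane. -/
def Jmat0 (Jc : List S.Λ → List S.Λ → ℂ) : Matrix S.PIdx0 S.PIdx0 ℂ :=
  Matrix.of fun p q => Jc p.1.1 q.1.1

end MajoranaSetting

/-!
The basis element `Θ(C_𝔍) ∘ C_𝔍'` equals `ζ^{|𝔍||𝔍'|} Θ(C_𝔍) C_𝔍'`. Taking adjoints reverses the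
two monomials, costs `q_𝔍 q_𝔍'` from reversing each of them, `(-1)^{k_𝔍 k_𝔍'}` from commuting them
past each other and `(-1)^{|𝔍||𝔍'|}` from `conj ζ = -ζ`; the last two cancel, so the basis element
is an eigenvector of `*` with eigenvalue `q_𝔍 q_𝔍'`. Since `conj s_𝔍 = q_𝔍 s_𝔍`, comparing
coefficients of `A*` and `A` in the basis gives the criterion for hermiticity.
-/

namespace List

variable {ι k R : Type*} [CommRing k] [Ring R] [Algebra k R] {c : ι → R}

theorem prod_map_mul_of_anticomm (hc : _root_.Pairwise fun i j => c i * c j = -(c j * c i))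
    {a : ι} : ∀ {J : List ι}, a ∉ J →
      (J.map c).prod * c a = (-1 : k) ^ J.length • (c a * (J.map c).prod)
  | [], _ => by simp
  | b :: J, ha => by
    rw [mem_cons, not_or] at ha
    simp only [map_cons, prod_cons, length_cons]
    rw [mul_assoc, prod_map_mul_of_anticomm hc ha.2, mul_smul_comm, ← mul_assoc,
      hc (Ne.symm ha.1), neg_mul, mul_assoc, smul_neg, ← neg_smul, pow_succ, mul_neg_one]

theorem prod_map_mul_prod_map_of_anticomm
    (hc : _root_.Pairwise fun i j => c i * c j = -(c j * c i)) (L : List ι) :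
    ∀ {L' : List ι}, L.Disjoint L' →
      (L.map c).prod * (L'.map c).prod
        = (-1 : k) ^ (L.length * L'.length) • ((L'.map c).prod * (L.map c).prod)
  | [], _ => by simp
  | a :: L', h => by
    rw [disjoint_cons_right] at h
    simp only [map_cons, prod_cons, length_cons]
    rw [← mul_assoc, prod_map_mul_of_anticomm (k := k) hc h.1, smul_mul_assoc, mul_assoc,
      prod_map_mul_prod_map_of_anticomm hc L h.2, mul_smul_comm, smul_smul, ← pow_add,
      ← mul_assoc, mul_add_one, add_comm L.length]

theorem star_prod_map_of_anticomm [StarRing R]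
    (hc : _root_.Pairwise fun i j => c i * c j = -(c j * c i)) (hstar : ∀ i, star (c i) = c i) :
    ∀ {J : List ι}, J.Nodup →
      star (J.map c).prod = (-1 : k) ^ (J.length * (J.length - 1) / 2) • (J.map c).prod
  | [], _ => by simp
  | a :: J, hJ => by
    rw [nodup_cons] at hJ
    simp only [map_cons, prod_cons, length_cons, star_mul, hstar, Nat.add_sub_cancel]
    rw [star_prod_map_of_anticomm hc hstar hJ.2, smul_mul_assoc,
      prod_map_mul_of_anticomm (k := k) hc hJ.1, smul_smul, ← pow_add]
    congr 2
    rcases J.length with _ | n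
    · rfl
    · rw [Nat.add_sub_cancel, show (n + 1 + 1) * (n + 1) = (n + 1) * n + 2 * (n + 1) by ring,
        Nat.add_mul_div_left _ _ two_pos]

end List

theorem Complex.conj_eq_neg_of_sq_eq_neg_one {z : ℂ} (hz : z ^ 2 = -1) :
    starRingEnd ℂ z = -z := by
  have : (z - I) * (z + I) = 0 := by linear_combination hz - I_sq
  rcases mul_eq_zero.mp this with h | h
  · simp [sub_eq_zero.mp h, conj_I]
  · simp [eq_neg_of_add_eq_zero_left h, conj_I]

namespace MajoranaSetting

variable (S : MajoranaSetting)

theorem c_anticomm : Pairwise fun i j => S.c i * S.c j = -(S.c j * S.c i) := fun i j hij =>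
  eq_neg_of_add_eq_zero_left (by simpa [hij] using S.clifford i j)

theorem Θ_one : S.Θ 1 = 1 := by
  simpa only [mul_one, S.Θ_invol, one_mul] using (S.Θ_mul (S.Θ 1) 1).symm

theorem Θ_C (J : List S.Λ) : S.Θ (S.C J) = S.C (J.map S.ϑ) := by
  induction J with
  | nil => exact S.Θ_one
  | cons a J ih =>
    simp only [C, List.map_cons, List.prod_cons] at ih ⊢
    rw [S.Θ_mul, S.Θ_c, ih]

theorem gauge_C (J : List S.Λ) : S.gauge (S.C J) = (-1 : ℂ) ^ J.length • S.C J := by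
  rw [C, map_list_prod, List.map_map, show S.gauge ∘ S.c = Neg.neg ∘ S.c from funext S.gauge_c,
    ← List.map_map, List.prod_map_neg, List.length_map, Algebra.smul_def, map_pow, map_neg,
    map_one]

theorem C_mem_adjoin {s : Set S.Λ} {J : List S.Λ} (hJ : ∀ i ∈ J, i ∈ s) :
    S.C J ∈ Algebra.adjoin ℂ (S.c '' s) :=
  Subalgebra.list_prod_mem _ <| List.forall_mem_map.mpr fun i hi =>
    Algebra.subset_adjoin ⟨i, hJ i hi, rfl⟩

theorem star_C {J : List S.Λ} (hJ : J.Nodup) : star (S.C J) = S.q J • S.C J :=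
  List.star_prod_map_of_anticomm (k := ℂ) S.c_anticomm S.c_star hJ

theorem twist_of_mem_Aminus_of_mem_Aplus {x y : S.carrier} {m n : ℕ} (hm : m ≤ 1) (hn : n ≤ 1)
    (hx : x ∈ S.Aminus) (hy : y ∈ S.Aplus)
    (hgx : S.gauge x = (-1 : ℂ) ^ m • x) (hgy : S.gauge y = (-1 : ℂ) ^ n • y) :
    S.twist x y = S.ζ ^ (m * n) • (x * y) := by
  rw [← zpow_natCast, Nat.cast_mul]
  simpa using S.twist_spec x 1 1 y m 0 0 n hm (by omega) (by omega) hn hx (one_mem _)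
    (one_mem _) hy hgx (by simp) (by simp) hgy

theorem twist_Θ_C_C {J J' : List S.Λ} (hJ : ∀ i ∈ J, i ∈ S.Λp) (hJ' : ∀ i ∈ J', i ∈ S.Λp) :
    S.twist (S.Θ (S.C J)) (S.C J')
      = S.ζ ^ (J.length % 2 * (J'.length % 2)) • (S.Θ (S.C J) * S.C J') := by
  refine S.twist_of_mem_Aminus_of_mem_Aplus (by omega) (by omega) ?_ (S.C_mem_adjoin hJ') ?_ ?_
  · rw [Θ_C]
    exact S.C_mem_adjoin <| List.forall_mem_map.mpr fun i hi => (S.ϑ_exch i).mp (hJ i hi)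
  · rw [Θ_C, gauge_C, List.length_map, ← neg_one_pow_eq_pow_mod_two]
  · rw [gauge_C, ← neg_one_pow_eq_pow_mod_two]

theorem ζ_ne_zero : S.ζ ≠ 0 := by
  rintro h
  simpa [h] using S.ζ_sq

theorem conj_ζ_pow (n : ℕ) : starRingEnd ℂ (S.ζ ^ n) = (-1) ^ n * S.ζ ^ n := by
  rw [map_pow, Complex.conj_eq_neg_of_sq_eq_neg_one S.ζ_sq, neg_pow]

theorem conj_sgn (J : List S.Λ) : starRingEnd ℂ (S.sgn J) = S.q J * S.sgn J :=
  S.conj_ζ_pow _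

theorem conj_sgn_mul_sgn_mul_eq_iff (J J' : List S.Λ) (z : ℂ) :
    starRingEnd ℂ (S.sgn J * S.sgn J' * z) = S.sgn J * S.sgn J' * z
      ↔ S.q J * S.q J' * starRingEnd ℂ z = z := by
  have hsgn : S.sgn J * S.sgn J' ≠ 0 :=
    mul_ne_zero (pow_ne_zero _ S.ζ_ne_zero) (pow_ne_zero _ S.ζ_ne_zero)
  rw [map_mul, map_mul, conj_sgn, conj_sgn]
  calc _ ↔ S.sgn J * S.sgn J' * (S.q J * S.q J' * starRingEnd ℂ z) = S.sgn J * S.sgn J' * z :=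
        by ring_nf
    _ ↔ _ := mul_right_inj' hsgn

theorem star_twist_Θ_C_C {J J' : List S.Λ} (hJ : J ∈ S.P) (hJ' : J' ∈ S.P) :
    star (S.twist (S.Θ (S.C J)) (S.C J'))
      = (S.q J * S.q J') • S.twist (S.Θ (S.C J)) (S.C J') := by
  have hdisj : J'.Disjoint (J.map S.ϑ) := fun i hi hi' => by
    obtain ⟨j, hj, rfl⟩ := List.mem_map.mp hi'
    exact (S.ϑ_exch j).mp (S.P_sub J hJ j hj) (S.P_sub J' hJ' _ hi)
  have hcomm : S.C J' * S.C (J.map S.ϑ)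
      = (-1 : ℂ) ^ (J'.length * J.length) • (S.C (J.map S.ϑ) * S.C J') := by
    simpa only [C, List.map_map, List.length_map] using
      List.prod_map_mul_prod_map_of_anticomm (k := ℂ) S.c_anticomm J' hdisj
  have hsign : (-1 : ℂ) ^ (J.length % 2 * (J'.length % 2)) = (-1) ^ (J'.length * J.length) := by
    rw [neg_one_pow_eq_pow_mod_two, ← Nat.mul_mod, mul_comm, ← neg_one_pow_eq_pow_mod_two]
  have hq : S.q (J.map S.ϑ) = S.q J := by simp [q]
  rw [S.twist_Θ_C_C (S.P_sub J hJ) (S.P_sub J' hJ'), star_smul, star_mul, Θ_C,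
    S.star_C (S.P_nodup J' hJ'), S.star_C ((S.P_nodup J hJ).map S.ϑ_invol.injective), hq,
    smul_mul_smul_comm, hcomm, ← starRingEnd_apply, conj_ζ_pow, hsign]
  simp only [smul_smul]
  congr 1
  have hsq : (-1 : ℂ) ^ (J'.length * J.length) * (-1) ^ (J'.length * J.length) = 1 := by
    rw [← mul_pow, neg_one_mul, neg_neg, one_pow]
  linear_combination (S.q J * S.q J' * S.ζ ^ (J.length % 2 * (J'.length % 2))) * hsq

theorem star_sum_twist (a : List S.Λ → List S.Λ → ℂ) :
    star (∑ J ∈ S.P, ∑ J' ∈ S.P, a J J' • S.twist (S.Θ (S.C J)) (S.C J'))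
      = ∑ J ∈ S.P, ∑ J' ∈ S.P,
          (S.q J * S.q J' * starRingEnd ℂ (a J J')) • S.twist (S.Θ (S.C J)) (S.C J') := by
  simp only [star_sum]
  refine Finset.sum_congr rfl fun J hJ => Finset.sum_congr rfl fun J' hJ' => ?_
  rw [star_smul, S.star_twist_Θ_C_C hJ hJ', smul_smul, starRingEnd_apply, mul_comm]

theorem sum_twist_eq_sum_twist_iff (a b : List S.Λ → List S.Λ → ℂ) :
    ∑ J ∈ S.P, ∑ J' ∈ S.P, a J J' • S.twist (S.Θ (S.C J)) (S.C J')
        = ∑ J ∈ S.P, ∑ J' ∈ S.P, b J J' • S.twist (S.Θ (S.C J)) (S.C J')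
      ↔ ∀ J ∈ S.P, ∀ J' ∈ S.P, a J J' = b J J' := by
  have hsum (f : List S.Λ → List S.Λ → ℂ) :
      ∑ p : S.PIdx × S.PIdx, f p.1 p.2 • S.twist (S.Θ (S.C p.1)) (S.C p.2)
        = ∑ J ∈ S.P, ∑ J' ∈ S.P, f J J' • S.twist (S.Θ (S.C J)) (S.C J') := by
    rw [Fintype.sum_prod_type]
    exact (Finset.sum_coe_sort S.P _).trans
      (Finset.sum_congr rfl fun J _ => Finset.sum_coe_sort S.P
        (fun J' => f J J' • S.twist (S.Θ (S.C J)) (S.C J')))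
  refine ⟨fun h J hJ J' hJ' => ?_, fun h => ?_⟩
  · rw [← hsum a, ← hsum b] at h
    exact Fintype.linearIndependent_iffₛ.mp S.basis_indep
      (fun p => a p.1 p.2) (fun p => b p.1 p.2) h (⟨J, hJ⟩, ⟨J', hJ'⟩)
  · exact Finset.sum_congr rfl fun J hJ => Finset.sum_congr rfl fun J' hJ' => by rw [h J hJ J' hJ']

end MajoranaSetting

/-- `A*` has coefficients `q_𝔍 q_𝔍' conj(a_{𝔍𝔍'})`, and `A` is hermitian
iff `s_𝔍 s_𝔍' a_{𝔍𝔍'}` is real for all `𝔍, 𝔍' ∈ 𝒫₊`. -/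
theorem adjoint_coeffs_and_hermitian (S : MajoranaSetting)
    (a : List S.Λ → List S.Λ → ℂ) (A : S.carrier)
    (hA : A = ∑ J ∈ S.P, ∑ J' ∈ S.P, a J J' • S.twist (S.Θ (S.C J)) (S.C J')) :
    (star A = ∑ J ∈ S.P, ∑ J' ∈ S.P,
        (S.q J * S.q J' * starRingEnd ℂ (a J J')) • S.twist (S.Θ (S.C J)) (S.C J')) ∧
    (star A = A ↔ ∀ J ∈ S.P, ∀ J' ∈ S.P,
        starRingEnd ℂ (S.sgn J * S.sgn J' * a J J') = S.sgn J * S.sgn J' * a J J') := by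
  have hstar := hA ▸ S.star_sum_twist a
  refine ⟨hstar, ?_⟩
  rw [hstar, hA, S.sum_twist_eq_sum_twist_iff]
  exact forall₂_congr fun J _ => forall₂_congr fun J' _ =>
    (S.conj_sgn_mul_sgn_mul_eq_iff J J' _).symm
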